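/- arXiv:2509.20994 — 2 statements merged into one kernel-verified Lean document; each statement's English description precedes it below -/
import Mathlib

section
/- Let n, r, k, s be integers with k ≥ 2, r ≥ 0, 1 ≤ s ≤ k−1, and n = k·r + s. Let m = n(n−1)/2 be the number of edges of the complete graph K_n. Then f_k(K_n) = (k−1)/k·m + (k−1)/(2k)·h(m) + (k−1)/(2k) − s(k−s)/(2k), and this maximum is attained by a balanced k-partition. -/
open Finset

noncomputable def hfun (x : ℝ) : ℝ := Real.sqrt (2 * x + 1 / 4) - 1 / 2

variable {V : Type*} [Fintype V] [DecidableEq V]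

/-- Number of edges of `G` with both endpoints in `S`. -/
def eIn (G : SimpleGraph V) [DecidableRel G.Adj] (S : Finset V) : ℕ :=
  (Finset.univ.filter (fun p : V × V => G.Adj p.1 p.2 ∧ p.1 ∈ S ∧ p.2 ∈ S)).card / 2

/-- Number of edges of `G` with one endpoint in `S` and the other in `T` (for disjoint `S`, `T`). -/
def eCross (G : SimpleGraph V) [DecidableRel G.Adj] (S T : Finset V) : ℕ :=
  (Finset.univ.filter (fun p : V × V => G.Adj p.1 p.2 ∧ p.1 ∈ S ∧ p.2 ∈ T)).card

/-- `P` is a partition of the vertex set into `k` pairwise disjoint (possibly empty) parts. -/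
def IsKPartition {k : ℕ} (P : Fin k → Finset V) : Prop :=
  (∀ i j : Fin k, i ≠ j → Disjoint (P i) (P j)) ∧ ∀ v : V, ∃ i, v ∈ P i

/-- The number of crossing edges of a `k`-partition. -/
def crossTotal (G : SimpleGraph V) [DecidableRel G.Adj] {k : ℕ} (P : Fin k → Finset V) : ℕ :=
  ∑ i : Fin k, ∑ j : Fin k, if i < j then eCross G (P i) (P j) else 0

/-- `f_k(G)`: the maximum number of crossing edges over all `k`-partitions of `G`. -/
noncomputable def maxCut (G : SimpleGraph V) [DecidableRel G.Adj] (k : ℕ) : ℕ :=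
  sSup {n : ℕ | ∃ P : Fin k → Finset V, IsKPartition P ∧ crossTotal G P = n}

/-- A `k`-partition is balanced if any two parts differ in size by at most 1. -/
def IsBalanced {V : Type*} {k : ℕ} (P : Fin k → Finset V) : Prop :=
  ∀ i j : Fin k, (P i).card ≤ (P j).card + 1

/-! For `Kₙ`, every `k`-partition satisfies `2·crossTotal P + ∑ |P i|² = n²`, so maximizing the cut
means minimizing the sum of squares of the part sizes at fixed total `n`. Termwise
`(2r+1)·a ≤ a² + r(r+1)`, with equality exactly when `a ∈ {r, r+1}`, so any partition into parts of
sizes `r` and `r+1` (such as the residue classes mod `k`) is optimal, with cut value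
`(n² - (2r+1)n + k·r(r+1))/2`. Since `h(n(n-1)/2) = n - 1`, this is the stated formula. -/

section SumSq

variable {ι : Type*} [Fintype ι]

theorem sq_sum_eq_sum_sq_add_two_mul_sum_lt {R : Type*} [CommSemiring R] [LinearOrder ι]
    (f : ι → R) :
    (∑ i, f i) ^ 2 = ∑ i, f i ^ 2 + 2 * ∑ i, ∑ j, if i < j then f i * f j else 0 := by
  have hsplit : ∀ i j, f i * f j = (if i < j then f i * f j else 0)
      + (if j < i then f j * f i else 0) + (if i = j then f i * f j else 0) := by
    intro i j
    rcases lt_trichotomy i j with h | rfl | h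
    · simp [h, h.ne, asymm h]
    · simp
    · simp [h, h.ne', asymm h, mul_comm]
  calc (∑ i, f i) ^ 2 = ∑ i, ∑ j, f i * f j := by rw [sq, sum_mul_sum]
    _ = (∑ i, ∑ j, if i < j then f i * f j else 0)
        + (∑ i, ∑ j, if j < i then f j * f i else 0)
        + ∑ i, ∑ j, if i = j then f i * f j else 0 := by
      simp only [← sum_add_distrib, ← hsplit]
    _ = ∑ i, f i ^ 2 + 2 * ∑ i, ∑ j, if i < j then f i * f j else 0 := by
      rw [sum_comm (f := fun i j => if j < i then f j * f i else 0)]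
      simp only [sum_ite_eq, mem_univ, if_true, sq]
      ring

/-- `(a - r)(a - r - 1) ≥ 0` for integers, rearranged. -/
theorem two_mul_add_one_mul_le (a r : ℕ) : (2 * r + 1) * a ≤ a ^ 2 + r * (r + 1) := by
  rcases le_or_gt a r with h | h <;> nlinarith

theorem two_mul_add_one_mul_sum_le (a : ι → ℕ) (r : ℕ) :
    (2 * r + 1) * ∑ i, a i ≤ ∑ i, a i ^ 2 + Fintype.card ι * (r * (r + 1)) := by
  calc (2 * r + 1) * ∑ i, a i = ∑ i, (2 * r + 1) * a i := mul_sum ..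
    _ ≤ ∑ i, (a i ^ 2 + r * (r + 1)) := sum_le_sum fun i _ => two_mul_add_one_mul_le (a i) r
    _ = ∑ i, a i ^ 2 + Fintype.card ι * (r * (r + 1)) := by
      rw [sum_add_distrib, sum_const, card_univ, smul_eq_mul]

theorem sum_sq_add_card_mul_eq {b : ι → ℕ} {r : ℕ} (hb : ∀ i, b i = r ∨ b i = r + 1) :
    ∑ i, b i ^ 2 + Fintype.card ι * (r * (r + 1)) = (2 * r + 1) * ∑ i, b i := by
  rw [mul_sum, ← card_univ, ← smul_eq_mul, ← sum_const, ← sum_add_distrib]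
  refine sum_congr rfl fun i _ => ?_
  rcases hb i with h | h <;> rw [h] <;> ring

theorem sum_sq_le_sum_sq_of_sum_eq {a b : ι → ℕ} {r : ℕ} (hb : ∀ i, b i = r ∨ b i = r + 1)
    (hsum : ∑ i, b i = ∑ i, a i) : ∑ i, b i ^ 2 ≤ ∑ i, a i ^ 2 := by
  have := two_mul_add_one_mul_sum_le a r
  rw [← hsum, ← sum_sq_add_card_mul_eq hb] at this
  omega

end SumSq

theorem eCross_top {S T : Finset V} (h : Disjoint S T) : eCross ⊤ S T = #S * #T := by
  rw [eCross, ← card_product]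
  congr 1
  ext ⟨x, y⟩
  simp only [mem_filter, mem_univ, true_and, SimpleGraph.top_adj, mem_product,
    and_iff_right_iff_imp, and_imp]
  rintro hx hy rfl
  exact disjoint_left.mp h hx hy

namespace IsKPartition

variable {k : ℕ} {P : Fin k → Finset V}

theorem sum_card (hP : IsKPartition P) : ∑ i, #(P i) = Fintype.card V := by
  rw [← card_biUnion fun i _ j _ hij => hP.1 i j hij, ← card_univ]
  congr 1
  ext v
  simpa using hP.2 v

theorem two_mul_crossTotal_top_add_sum_sq (hP : IsKPartition P) :
    2 * crossTotal ⊤ P + ∑ i, #(P i) ^ 2 = Fintype.card V ^ 2 := by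
  have hcross : crossTotal ⊤ P = ∑ i, ∑ j, if i < j then #(P i) * #(P j) else 0 := by
    refine sum_congr rfl fun i _ => sum_congr rfl fun j _ => ?_
    split_ifs with h
    exacts [eCross_top (hP.1 i j h.ne), rfl]
  rw [← hP.sum_card, sq_sum_eq_sum_sq_add_two_mul_sum_lt, hcross, add_comm]

theorem crossTotal_top_le {Q : Fin k → Finset V} {r : ℕ} (hP : IsKPartition P)
    (hQ : IsKPartition Q) (hQr : ∀ i, #(Q i) = r ∨ #(Q i) = r + 1) :
    crossTotal ⊤ P ≤ crossTotal ⊤ Q := by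
  have hsq := sum_sq_le_sum_sq_of_sum_eq hQr (hQ.sum_card.trans hP.sum_card.symm)
  have := hP.two_mul_crossTotal_top_add_sum_sq
  have := hQ.two_mul_crossTotal_top_add_sum_sq
  omega

end IsKPartition

theorem maxCut_top_eq_crossTotal {k r : ℕ} {Q : Fin k → Finset V} (hQ : IsKPartition Q)
    (hQr : ∀ i, #(Q i) = r ∨ #(Q i) = r + 1) : maxCut (⊤ : SimpleGraph V) k = crossTotal ⊤ Q := by
  refine IsGreatest.csSup_eq ⟨⟨Q, hQ, rfl⟩, ?_⟩
  rintro _ ⟨P, hP, rfl⟩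
  exact hP.crossTotal_top_le hQ hQr

def residuePartition (n k : ℕ) : Fin k → Finset (Fin n) :=
  fun i => {v | (v : ℕ) % k = i}

section residuePartition

variable {n k : ℕ}

theorem isKPartition_residuePartition (hk : 0 < k) : IsKPartition (residuePartition n k) := by
  refine ⟨fun i j hij => disjoint_left.mpr fun v hi hj => hij ?_,
    fun v => ⟨⟨v % k, Nat.mod_lt _ hk⟩, by simp [residuePartition]⟩⟩
  simp only [residuePartition, mem_filter, mem_univ, true_and] at hi hj
  exact Fin.ext (hi.symm.trans hj)

theorem card_residuePartition (hk : 0 < k) (i : Fin k) :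
    #(residuePartition n k i) = n / k + if (i : ℕ) < n % k then 1 else 0 := by
  have hcount := Nat.count_modEq_card n hk i
  rw [Nat.mod_eq_of_lt i.isLt, Nat.count_eq_card_filter_range, ← Nat.Iio_eq_range,
    ← Fin.map_valEmbedding_univ, filter_map, card_map] at hcount
  rw [← hcount]
  congr 1
  ext v
  simp [residuePartition, Nat.ModEq, Nat.mod_eq_of_lt i.isLt]

theorem card_residuePartition_eq_or_eq (hk : 0 < k) (i : Fin k) :
    #(residuePartition n k i) = n / k ∨ #(residuePartition n k i) = n / k + 1 := by
  rw [card_residuePartition hk]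
  split_ifs <;> simp

theorem isBalanced_residuePartition (hk : 0 < k) : IsBalanced (residuePartition n k) := by
  intro i j
  rcases card_residuePartition_eq_or_eq (n := n) hk i with h | h <;>
    rcases card_residuePartition_eq_or_eq (n := n) hk j with h' | h' <;> omega

end residuePartition

theorem hfun_choose_two {n : ℕ} (hn : 1 ≤ n) : hfun (n.choose 2) = n - 1 := by
  have hn' : (1 : ℝ) ≤ n := by exact_mod_cast hn
  rw [hfun, Nat.cast_choose_two, show 2 * ((n : ℝ) * (n - 1) / 2) + 1 / 4 = (n - 1 / 2) ^ 2 by ring,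
    Real.sqrt_sq (by linarith)]
  ring

theorem stmt_6_general (n r k s : ℕ) (hs1 : 1 ≤ s) (hs2 : s ≤ k - 1)
    (hn : n = k * r + s) (m : ℕ) (hm : m = n * (n - 1) / 2) :
    (maxCut (⊤ : SimpleGraph (Fin n)) k : ℝ)
        = ((k : ℝ) - 1) / k * m + ((k : ℝ) - 1) / (2 * k) * hfun m
          + ((k : ℝ) - 1) / (2 * k) - (s : ℝ) * ((k : ℝ) - s) / (2 * k) ∧
      ∃ P : Fin k → Finset (Fin n), IsKPartition P ∧ IsBalanced P ∧
        crossTotal (⊤ : SimpleGraph (Fin n)) P = maxCut (⊤ : SimpleGraph (Fin n)) k := by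
  have hk0 : 0 < k := by omega
  have hr : n / k = r := by
    rw [hn, Nat.mul_add_div hk0, Nat.div_eq_of_lt (by omega), add_zero]
  set P := residuePartition n k
  have hP := isKPartition_residuePartition (n := n) hk0
  have hPr : ∀ i, #(P i) = r ∨ #(P i) = r + 1 := hr ▸ card_residuePartition_eq_or_eq hk0
  have hmax := maxCut_top_eq_crossTotal hP hPr
  refine ⟨?_, P, hP, isBalanced_residuePartition hk0, hmax.symm⟩
  have hcross := hP.two_mul_crossTotal_top_add_sum_sq
  have hsq := sum_sq_add_card_mul_eq hPr
  rw [Fintype.card_fin] at hcross hsq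
  rw [hP.sum_card, Fintype.card_fin] at hsq
  have hcrossR : (2 * crossTotal ⊤ P + ∑ i, #(P i) ^ 2 : ℝ) = n ^ 2 := by exact_mod_cast hcross
  have hsqR : (∑ i, #(P i) ^ 2 + k * (r * (r + 1)) : ℝ) = (2 * r + 1) * n := by exact_mod_cast hsq
  have hnR : (n : ℝ) = k * r + s := by exact_mod_cast hn
  have hcut : 2 * k * (crossTotal ⊤ P : ℝ) = (k - 1) * n ^ 2 - s * (k - s) := by
    linear_combination k * hcrossR - k * hsqR + (n - k * r - k + s) * hnR
  rw [hm, ← Nat.choose_two_right, hfun_choose_two (by omega), Nat.cast_choose_two, hmax]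
  field_simp
  linear_combination hcut

/-- If `n = k·r + s` with `1 ≤ s ≤ k−1` and `m = n(n−1)/2`, then
`f_k(Kₙ) = (k−1)/k·m + (k−1)/(2k)·h(m) + (k−1)/(2k) − s(k−s)/(2k)`,
attained by a balanced partition. -/
theorem stmt_6 (n r k s : ℕ) (hk : 2 ≤ k) (hs1 : 1 ≤ s) (hs2 : s ≤ k - 1)
    (hn : n = k * r + s) (m : ℕ) (hm : m = n * (n - 1) / 2) :
    (maxCut (⊤ : SimpleGraph (Fin n)) k : ℝ)
        = ((k : ℝ) - 1) / k * m + ((k : ℝ) - 1) / (2 * k) * hfun m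
          + ((k : ℝ) - 1) / (2 * k) - (s : ℝ) * ((k : ℝ) - s) / (2 * k) ∧
      ∃ P : Fin k → Finset (Fin n), IsKPartition P ∧ IsBalanced P ∧
        crossTotal (⊤ : SimpleGraph (Fin n)) P = maxCut (⊤ : SimpleGraph (Fin n)) k :=
  stmt_6_general n r k s hs1 hs2 hn m hm
end

section
/- Let G be a finite simple graph, k ≥ 2 an integer, and let (V_1, …, V_k) be a k-partition of G of minimum lexicographic order. Then for all i, j ∈ {1, …, k} and every vertex v ∈ V_i: if |N(v) ∩ V_i| ≥ 2 and e(V_i) > e(V_j), then |N(v) ∩ V_j| ≥ 2. -/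
open Finset

variable {V : Type*} [Fintype V] [DecidableEq V]

/-- The values `e(V₁),…,e(V_k)` of a `k`-partition, listed in nonincreasing order. -/
def lexVals {V : Type*} [Fintype V] [DecidableEq V] (G : SimpleGraph V) [DecidableRel G.Adj]
    {k : ℕ} (P : Fin k → Finset V) : List ℕ :=
  Multiset.sort ((Finset.univ : Finset (Fin k)).val.map fun i => eIn G (P i)) (· ≥ ·)

/-- `Q` is lexicographically smaller than `P`. -/
def LexSmaller {V : Type*} [Fintype V] [DecidableEq V] (G : SimpleGraph V) [DecidableRel G.Adj]
    {k : ℕ} (Q P : Fin k → Finset V) : Prop :=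
  List.Lex (· < ·) (lexVals G Q) (lexVals G P)

/-! If `v` had at most one neighbour in `V_j`, move it from `V_i` to `V_j`. This lowers `e(V_i)`
by `|N(v) ∩ V_i| ≥ 2`, raises `e(V_j) < e(V_i)` by at most one and leaves the other parts alone.
For nonincreasingly sorted lists, the lexicographic order is decided at the largest value whose
multiplicity differs; here that value is `e(V_i)`, or `e(V_j)` if the move makes `e(V_j)` equal
to `e(V_i)`, and it occurs fewer times after the move, contradicting minimality. -/

theorem List.lex_lt_of_count_eq_of_count_lt {α : Type*} [LinearOrder α] (t : α) :
    ∀ {l' l : List α}, l'.Pairwise (· ≥ ·) → l.Pairwise (· ≥ ·) →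
      (∀ n, t < n → l'.count n = l.count n) → l'.count t < l.count t →
      List.Lex (· < ·) l' l
  | _, [], _, _, _, ht => by simp at ht
  | [], _ :: _, _, _, _, _ => .nil
  | a' :: l', a :: l, hl', hl, hgt, ht => by
    rw [List.pairwise_cons] at hl' hl
    rcases lt_trichotomy a' a with hlt | rfl | hlt
    · exact .rel hlt
    · rw [List.count_cons, List.count_cons] at ht
      refine .cons (lex_lt_of_count_eq_of_count_lt t hl'.2 hl.2 (fun n hn => ?_) (by omega))
      have := hgt n hn
      rw [List.count_cons, List.count_cons] at this
      omega
    · have hbelow : ∀ x ∈ a :: l, x < a' := by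
        simp only [List.mem_cons, forall_eq_or_imp]
        exact ⟨hlt, fun x hx => (hl.1 x hx).trans_lt hlt⟩
      exfalso
      by_cases hta : t < a'
      · have := hgt a' hta
        rw [List.count_eq_zero.2 fun h => (hbelow a' h).false] at this
        simp at this
      · rw [List.count_eq_zero.2 fun h => (hbelow t h).not_ge (not_lt.1 hta)] at ht
        exact Nat.not_lt_zero _ ht

theorem Multiset.lex_sort_lt_of_count_eq_of_count_lt {α : Type*} [LinearOrder α] (t : α)
    {M' M : Multiset α} (hgt : ∀ n, t < n → M'.count n = M.count n)
    (ht : M'.count t < M.count t) :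
    List.Lex (· < ·) (M'.sort (· ≥ ·)) (M.sort (· ≥ ·)) := by
  refine List.lex_lt_of_count_eq_of_count_lt t (pairwise_sort _ _) (pairwise_sort _ _)
    (fun n hn => ?_) ?_ <;> rw [← coe_count, ← coe_count, sort_eq, sort_eq]
  exacts [hgt n hn, ht]

theorem Multiset.lex_sort_cons_cons_lt {a b a' b' : ℕ} (R : Multiset ℕ) (hba : b < a)
    (ha' : a' + 2 ≤ a) (hb' : b' ≤ b + 1) :
    List.Lex (· < ·) ((a' ::ₘ b' ::ₘ R).sort (· ≥ ·)) ((a ::ₘ b ::ₘ R).sort (· ≥ ·)) := by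
  by_cases hb'a : b' < a
  · refine lex_sort_lt_of_count_eq_of_count_lt a (fun n hn => ?_) ?_ <;>
      simp only [count_cons] <;> split_ifs <;> omega
  · refine lex_sort_lt_of_count_eq_of_count_lt b (fun n hn => ?_) ?_ <;>
      simp only [count_cons] <;> split_ifs <;> omega

theorem Finset.univ_val_map_eq_cons_cons {ι α : Type*} [Fintype ι] [DecidableEq ι] {i j : ι}
    (hij : i ≠ j) (f : ι → α) :
    (univ : Finset ι).val.map f = f i ::ₘ f j ::ₘ ((univ.erase i).erase j).val.map f := by
  have hj : j ∈ (univ.erase i).val := mem_erase.2 ⟨hij.symm, mem_univ j⟩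
  rw [← Multiset.map_cons, ← Multiset.map_cons, erase_val, erase_val, ← erase_val,
    Multiset.cons_erase hj, erase_val, Multiset.cons_erase (mem_univ i)]

section
variable (G : SimpleGraph V) [DecidableRel G.Adj]

theorem card_filter_adj_mem_eq_sum (S : Finset V) :
    #(univ.filter fun p : V × V => G.Adj p.1 p.2 ∧ p.1 ∈ S ∧ p.2 ∈ S) =
      ∑ x ∈ S, #(G.neighborFinset x ∩ S) := by
  calc _ = ∑ x, if x ∈ S then #(G.neighborFinset x ∩ S) else 0 := by
        rw [card_filter, Fintype.sum_prod_type]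
        refine sum_congr rfl fun x _ => ?_
        by_cases hx : x ∈ S
        · rw [← filter_mem_eq_inter, card_filter, SimpleGraph.neighborFinset_eq_filter, sum_filter]
          simp [hx, ite_and]
        · simp [hx]
    _ = _ := by rw [← sum_filter, filter_mem_eq_inter, univ_inter]

theorem sum_card_neighborFinset_inter_insert {S : Finset V} {v : V} (hv : v ∉ S) :
    ∑ x ∈ insert v S, #(G.neighborFinset x ∩ insert v S) =
      ∑ x ∈ S, #(G.neighborFinset x ∩ S) + 2 * #(G.neighborFinset v ∩ S) := by
  have hvv : G.neighborFinset v ∩ insert v S = G.neighborFinset v ∩ S :=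
    inter_insert_of_notMem (by simp)
  have hx : ∀ x ∈ S, #(G.neighborFinset x ∩ insert v S) =
      #(G.neighborFinset x ∩ S) + if v ∈ G.neighborFinset x then 1 else 0 := by
    intro x _
    split_ifs with hxv
    · rw [inter_insert_of_mem hxv, card_insert_of_notMem fun h => hv (mem_inter.1 h).2]
    · rw [inter_insert_of_notMem hxv, add_zero]
  have hcount :
      (∑ x ∈ S, if v ∈ G.neighborFinset x then 1 else 0) = #(G.neighborFinset v ∩ S) := by
    rw [← card_filter, inter_comm, ← filter_mem_eq_inter]
    simp only [SimpleGraph.mem_neighborFinset, G.adj_comm]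
  rw [sum_insert hv, hvv, sum_congr rfl hx, sum_add_distrib, hcount]
  ring

theorem eIn_insert {S : Finset V} {v : V} (hv : v ∉ S) :
    eIn G (insert v S) = eIn G S + #(G.neighborFinset v ∩ S) := by
  simp only [eIn, card_filter_adj_mem_eq_sum, sum_card_neighborFinset_inter_insert G hv]
  omega

theorem eIn_erase_add {S : Finset V} {v : V} (hv : v ∈ S) :
    eIn G (S.erase v) + #(G.neighborFinset v ∩ S) = eIn G S := by
  conv_rhs => rw [← insert_erase hv]
  rw [eIn_insert G (notMem_erase v S), inter_erase,
    erase_eq_of_notMem (s := G.neighborFinset v ∩ S) (by simp)]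

theorem lexSmaller_of_eIn_le {k : ℕ} {Q P : Fin k → Finset V} {i j : Fin k} (hij : i ≠ j)
    (hrest : ∀ l, l ≠ i → l ≠ j → Q l = P l) (hji : eIn G (P j) < eIn G (P i))
    (hi : eIn G (Q i) + 2 ≤ eIn G (P i)) (hj : eIn G (Q j) ≤ eIn G (P j) + 1) :
    LexSmaller G Q P := by
  have hR : ∀ l ∈ ((univ.erase i).erase j).val, eIn G (Q l) = eIn G (P l) := by
    intro l hl
    rw [Finset.mem_val, mem_erase, mem_erase] at hl
    rw [hrest l hl.2.1 hl.1]
  unfold LexSmaller lexVals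
  rw [univ_val_map_eq_cons_cons hij, univ_val_map_eq_cons_cons hij, Multiset.map_congr rfl hR]
  exact Multiset.lex_sort_cons_cons_lt _ hji hi hj

end

section
variable {α ι : Type*} [DecidableEq α]

def moveVertex [DecidableEq ι] (P : ι → Finset α) (v : α) (j : ι) : ι → Finset α :=
  fun l => if l = j then insert v (P l) else (P l).erase v

theorem moveVertex_self [DecidableEq ι] (P : ι → Finset α) (v : α) (j : ι) :
    moveVertex P v j j = insert v (P j) :=
  if_pos rfl

theorem moveVertex_of_ne [DecidableEq ι] (P : ι → Finset α) (v : α) {j l : ι} (hl : l ≠ j) :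
    moveVertex P v j l = (P l).erase v :=
  if_neg hl

theorem mem_moveVertex [DecidableEq ι] {P : ι → Finset α} {v w : α} {j l : ι} :
    w ∈ moveVertex P v j l ↔ w = v ∧ l = j ∨ w ≠ v ∧ w ∈ P l := by
  unfold moveVertex
  split_ifs with hl <;> by_cases hw : w = v <;> simp [hl, hw]

theorem IsKPartition.moveVertex {k : ℕ} {P : Fin k → Finset α} (hP : IsKPartition P) (v : α)
    (j : Fin k) : IsKPartition (moveVertex P v j) := by
  refine ⟨fun l m hlm => disjoint_left.2 fun w hl hm => ?_, fun w => ?_⟩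
  · rw [mem_moveVertex] at hl hm
    rcases hl with ⟨rfl, rfl⟩ | ⟨hw, hl⟩
    · exact hm.elim (fun h => hlm h.2.symm) fun h => h.1 rfl
    · exact hm.elim (fun h => hw h.1) fun h => disjoint_left.1 (hP.1 l m hlm) hl h.2
  · by_cases hw : w = v
    · exact ⟨j, mem_moveVertex.2 (.inl ⟨hw, rfl⟩)⟩
    · obtain ⟨l, hl⟩ := hP.2 w
      exact ⟨l, mem_moveVertex.2 (.inr ⟨hw, hl⟩)⟩

end

theorem IsKPartition.notMem_of_ne {α : Type*} {k : ℕ} {P : Fin k → Finset α}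
    (hP : IsKPartition P) {v : α} {i l : Fin k} (hv : v ∈ P i) (hl : l ≠ i) : v ∉ P l :=
  disjoint_left.1 (hP.1 i l hl.symm) hv

theorem stmt_11_general {V : Type*} [Fintype V] [DecidableEq V]
    (G : SimpleGraph V) [DecidableRel G.Adj] (k : ℕ)
    (P : Fin k → Finset V) (hP : IsKPartition P)
    (hmin : ∀ Q : Fin k → Finset V, IsKPartition Q → ¬ LexSmaller G Q P)
    (i j : Fin k) (v : V) (hv : v ∈ P i)
    (hd : 2 ≤ (G.neighborFinset v ∩ P i).card) (he : eIn G (P j) < eIn G (P i)) :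
    2 ≤ (G.neighborFinset v ∩ P j).card := by
  by_contra! hj
  have hij : i ≠ j := by
    rintro rfl
    exact he.false
  refine hmin (moveVertex P v j) (hP.moveVertex v j) (lexSmaller_of_eIn_le G hij ?_ he ?_ ?_)
  · intro l hli hlj
    rw [moveVertex_of_ne P v hlj, erase_eq_of_notMem (hP.notMem_of_ne hv hli)]
  · have := eIn_erase_add G hv
    rw [moveVertex_of_ne P v hij]
    omega
  · rw [moveVertex_self, eIn_insert G (hP.notMem_of_ne hv hij.symm)]
    omega

/-- Lemma on `k`-partitions of minimum lexicographic order. -/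
theorem stmt_11 {V : Type*} [Fintype V] [DecidableEq V]
    (G : SimpleGraph V) [DecidableRel G.Adj] (k : ℕ) (hk : 2 ≤ k)
    (P : Fin k → Finset V) (hP : IsKPartition P)
    (hmin : ∀ Q : Fin k → Finset V, IsKPartition Q → ¬ LexSmaller G Q P)
    (i j : Fin k) (v : V) (hv : v ∈ P i)
    (hd : 2 ≤ (G.neighborFinset v ∩ P i).card) (he : eIn G (P j) < eIn G (P i)) :
    2 ≤ (G.neighborFinset v ∩ P j).card :=
  stmt_11_general G k P hP hmin i j v hv hd he
end
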